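/- Let L_1(x) = I_{H_1} + Σ_{j=1}^g A_j x_j and L_2(x) = I_{H_2} + Σ_{j=1}^g B_j x_j be monic linear operator pencils with bounded self-adjoint coefficients on separable real Hilbert spaces H_1, H_2. Let L̃_1 be the monic pencil on H_1 ⊕ ℝ with coefficients Ã_j = A_j ⊕ 0 (the operator acting as A_j on H_1 and as 0 on ℝ), i.e. L̃_1(x) = I_{H_1⊕ℝ} + Σ_{j=1}^g Ã_j x_j. Then for every n ∈ ℕ: D_{L_1}(n) ⊆ D_{L_2}(n) if and only if D_{ʰL̃_1}(n) ⊆ D_{ʰL_2}(n). -/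

import Mathlib

open scoped RealInnerProductSpace

noncomputable section

variable {E H K : Type*}

/-- A bounded operator on a real inner product space is symmetric (self-adjoint). -/
def OpIsSymm [NormedAddCommGroup E] [InnerProductSpace ℝ E] (T : E →L[ℝ] E) : Prop :=
  ∀ u v : E, ⟪T u, v⟫ = ⟪u, T v⟫

/-- A bounded operator on a real inner product space is positive semidefinite. -/
def OpIsPos [NormedAddCommGroup E] [InnerProductSpace ℝ E] (T : E →L[ℝ] E) : Prop :=
  OpIsSymm T ∧ ∀ v : E, 0 ≤ ⟪T v, v⟫

/-- A bounded operator is positive definite: `T - ε • id` is positive semidefinite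
for some `ε > 0`. -/
def OpIsPosDef [NormedAddCommGroup E] [InnerProductSpace ℝ E] (T : E →L[ℝ] E) : Prop :=
  ∃ ε : ℝ, 0 < ε ∧ OpIsPos (T - ε • ContinuousLinearMap.id ℝ E)

/-- The block operator on the Hilbert direct sum `H^n` whose `(i,k)` block is `c i k`. -/
def blockOp [NormedAddCommGroup H] [InnerProductSpace ℝ H] {n : ℕ}
    (c : Fin n → Fin n → (H →L[ℝ] H)) :
    (PiLp 2 fun _ : Fin n => H) →L[ℝ] (PiLp 2 fun _ : Fin n => H) :=
  (((PiLp.continuousLinearEquiv 2 ℝ (fun _ : Fin n => H)).symm.toContinuousLinearMap.comp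
    (ContinuousLinearMap.pi fun i : Fin n =>
      ∑ k : Fin n, (c i k).comp (ContinuousLinearMap.proj k))).comp
    (PiLp.continuousLinearEquiv 2 ℝ (fun _ : Fin n => H)).toContinuousLinearMap)

/-- Evaluation of the homogeneous linear pencil `I_H x₀ + Σ_j A_j x_j` at a tuple of
`n × n` matrices: the operator on `H^n` with `(i,k)` block
`(X₀)_{ik} I_H + Σ_j (X_j)_{ik} A_j`. -/
def hEval [NormedAddCommGroup H] [InnerProductSpace ℝ H] {g n : ℕ}
    (A : Fin g → (H →L[ℝ] H)) (X0 : Matrix (Fin n) (Fin n) ℝ)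
    (X : Fin g → Matrix (Fin n) (Fin n) ℝ) :
    (PiLp 2 fun _ : Fin n => H) →L[ℝ] (PiLp 2 fun _ : Fin n => H) :=
  blockOp fun i k => X0 i k • (1 : H →L[ℝ] H) + ∑ j, X j i k • A j

/-- Evaluation of the monic linear pencil `I_H + Σ_j A_j x_j` at a tuple of
`n × n` matrices. -/
def monicEval [NormedAddCommGroup H] [InnerProductSpace ℝ H] {g n : ℕ}
    (A : Fin g → (H →L[ℝ] H)) (X : Fin g → Matrix (Fin n) (Fin n) ℝ) :
    (PiLp 2 fun _ : Fin n => H) →L[ℝ] (PiLp 2 fun _ : Fin n => H) :=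
  hEval A 1 X

/-- Positivity of the evaluation `L(X) = A₀ ⊗ I_K + Σ_j A_j ⊗ X_j` of a linear operator
pencil at a tuple of bounded operators on a Hilbert space `K`. -/
def operPencilPos [NormedAddCommGroup H] [InnerProductSpace ℝ H]
    [NormedAddCommGroup K] [InnerProductSpace ℝ K] {g : ℕ}
    (A0 : H →L[ℝ] H) (A : Fin g → (H →L[ℝ] H)) (X : Fin g → (K →L[ℝ] K)) : Prop :=
  ∀ (m : ℕ) (h : Fin m → H) (u : Fin m → K),
    0 ≤ ∑ i, ∑ l,
      (⟪A0 (h i), h l⟫ * ⟪u i, u l⟫ + ∑ j, ⟪A j (h i), h l⟫ * ⟪X j (u i), u l⟫)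

/-- A bundled separable real Hilbert space. -/
structure SepHilbert where
  carrier : Type
  [nacg : NormedAddCommGroup carrier]
  [ips : InnerProductSpace ℝ carrier]
  [cs : CompleteSpace carrier]
  [sep : TopologicalSpace.SeparableSpace carrier]

attribute [instance] SepHilbert.nacg SepHilbert.ips SepHilbert.cs SepHilbert.sep


/-- The operator `T ⊕ 0` on `H ⊕ ℝ` acting as `T` on `H` and as `0` on `ℝ`. -/
def dsumZero {H : Type} [NormedAddCommGroup H] [InnerProductSpace ℝ H]
    (T : H →L[ℝ] H) : WithLp 2 (H × ℝ) →L[ℝ] WithLp 2 (H × ℝ) :=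
  ((WithLp.prodContinuousLinearEquiv 2 ℝ H ℝ).symm.toContinuousLinearMap.comp
    (T.prodMap (0 : ℝ →L[ℝ] ℝ))).comp
    (WithLp.prodContinuousLinearEquiv 2 ℝ H ℝ).toContinuousLinearMap

/-!
The extra summand `ℝ` of `L̃₁` contributes exactly the block `X₀`, so `ʰL̃₁(X₀, X) ⪰ 0` iff
`X₀ ⪰ 0` and `ʰL₁(X₀, X) ⪰ 0`; at `X₀ = I` this is `L₁(X) ⪰ 0`, which gives one direction.
Conversely, for `X₀ ≻ 0` choose an invertible `T` with `Tᵀ X₀ T = I`: the congruence by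
`T ⊗ I_H` preserves positivity and turns `ʰL(X₀, X)` into `L(Tᵀ X T)`, so the monic inclusion
applies. A singular `X₀ ⪰ 0` is reduced to this case through `X₀ + ε I` and `ε → 0`.
-/

open Matrix

section BlockOperators

variable [NormedAddCommGroup H] [InnerProductSpace ℝ H] {g n : ℕ}

lemma blockOp_apply (c : Fin n → Fin n → (H →L[ℝ] H)) (v : PiLp 2 fun _ : Fin n => H)
    (i : Fin n) : blockOp c v i = ∑ k, c i k (v k) := by
  simp [blockOp]

def innerMatrix (T : H →L[ℝ] H) (u v : PiLp 2 fun _ : Fin n => H) :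
    Matrix (Fin n) (Fin n) ℝ :=
  Matrix.of fun k i => ⟪T (u k), v i⟫

lemma inner_hEval (A : Fin g → (H →L[ℝ] H)) (X0 : Matrix (Fin n) (Fin n) ℝ)
    (X : Fin g → Matrix (Fin n) (Fin n) ℝ) (u v : PiLp 2 fun _ : Fin n => H) :
    ⟪hEval A X0 X u, v⟫ =
      (X0 * innerMatrix 1 u v).trace + ∑ j, (X j * innerMatrix (A j) u v).trace := by
  simp only [hEval, PiLp.inner_apply, blockOp_apply, sum_inner, trace, diag, mul_apply,
    innerMatrix, of_apply, _root_.add_apply, FunLike.coe_sum, Finset.sum_apply,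
    FunLike.coe_smul, Pi.smul_apply, inner_add_left, real_inner_smul_left, one_apply_eq_self,
    Finset.sum_add_distrib]
  exact congrArg _ ((Finset.sum_congr rfl fun _ _ => Finset.sum_comm).trans Finset.sum_comm)

lemma innerMatrix_transpose {T : H →L[ℝ] H} (hT : OpIsSymm T)
    (u v : PiLp 2 fun _ : Fin n => H) :
    (innerMatrix T u v)ᵀ = innerMatrix T v u := by
  ext k i
  exact (hT _ _).trans (real_inner_comm _ _)

lemma trace_mul_innerMatrix_comm {T : H →L[ℝ] H} (hT : OpIsSymm T)
    {M : Matrix (Fin n) (Fin n) ℝ} (hM : M.IsSymm) (u v : PiLp 2 fun _ : Fin n => H) :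
    (M * innerMatrix T u v).trace = (M * innerMatrix T v u).trace := by
  rw [← innerMatrix_transpose hT, ← trace_transpose, transpose_mul, transpose_transpose, hM.eq,
    trace_mul_comm]

lemma opIsSymm_one : OpIsSymm (1 : H →L[ℝ] H) := fun _ _ => rfl

lemma opIsSymm_hEval {A : Fin g → (H →L[ℝ] H)} {X0 : Matrix (Fin n) (Fin n) ℝ}
    {X : Fin g → Matrix (Fin n) (Fin n) ℝ} (hA : ∀ j, OpIsSymm (A j)) (hX0 : X0.IsSymm)
    (hX : ∀ j, (X j).IsSymm) : OpIsSymm (hEval A X0 X) := by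
  intro u v
  rw [← real_inner_comm u, inner_hEval, inner_hEval,
    trace_mul_innerMatrix_comm opIsSymm_one hX0]
  simp only [trace_mul_innerMatrix_comm (hA _) (hX _)]

lemma opIsPos_hEval_iff {A : Fin g → (H →L[ℝ] H)} {X0 : Matrix (Fin n) (Fin n) ℝ}
    {X : Fin g → Matrix (Fin n) (Fin n) ℝ} (hA : ∀ j, OpIsSymm (A j)) (hX0 : X0.IsSymm)
    (hX : ∀ j, (X j).IsSymm) : OpIsPos (hEval A X0 X) ↔ ∀ v, 0 ≤ ⟪hEval A X0 X v, v⟫ :=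
  and_iff_right (opIsSymm_hEval hA hX0 hX)

lemma hEval_add_smul_one (A : Fin g → (H →L[ℝ] H)) (X0 : Matrix (Fin n) (Fin n) ℝ)
    (X : Fin g → Matrix (Fin n) (Fin n) ℝ) (c : ℝ) :
    hEval A (X0 + c • 1) X = hEval A X0 X + c • 1 := by
  ext v i
  simp only [hEval, Matrix.add_apply, Matrix.smul_apply, one_apply, smul_eq_mul, mul_ite,
    mul_one, mul_zero, add_smul, ite_smul, zero_smul, blockOp_apply, _root_.add_apply,
    _root_.smul_apply, one_apply_eq_self, DFunLike.ite_apply, _root_.zero_apply, _root_.sum_apply,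
    Finset.sum_add_distrib, Finset.sum_ite_eq, Finset.mem_univ, ↓reduceIte, PiLp.add_apply,
    PiLp.smul_apply]
  abel

lemma inner_hEval_add_smul_one (A : Fin g → (H →L[ℝ] H)) (X0 : Matrix (Fin n) (Fin n) ℝ)
    (X : Fin g → Matrix (Fin n) (Fin n) ℝ) (c : ℝ) (v : PiLp 2 fun _ : Fin n => H) :
    ⟪hEval A (X0 + c • 1) X v, v⟫ = ⟪hEval A X0 X v, v⟫ + c * ‖v‖ ^ 2 := by
  rw [hEval_add_smul_one, _root_.add_apply, inner_add_left, _root_.smul_apply,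
    one_apply_eq_self, real_inner_smul_left, real_inner_self_eq_norm_sq]

/-- The operator `S ⊗ I_H` on `H^n`. -/
def matMulVec (S : Matrix (Fin n) (Fin n) ℝ) (v : PiLp 2 fun _ : Fin n => H) :
    PiLp 2 fun _ : Fin n => H :=
  WithLp.toLp 2 fun i => ∑ k, S i k • v k

lemma matMulVec_matMulVec (S T : Matrix (Fin n) (Fin n) ℝ) (v : PiLp 2 fun _ : Fin n => H) :
    matMulVec S (matMulVec T v) = matMulVec (S * T) v := by
  ext i
  simp only [matMulVec, PiLp.toLp_apply, Finset.smul_sum, mul_apply, Finset.sum_smul, smul_smul]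
  exact Finset.sum_comm

lemma matMulVec_one (v : PiLp 2 fun _ : Fin n => H) : matMulVec 1 v = v := by
  ext i
  simp [matMulVec, one_apply, ite_smul]

lemma innerMatrix_matMulVec (T : H →L[ℝ] H) (S : Matrix (Fin n) (Fin n) ℝ)
    (u v : PiLp 2 fun _ : Fin n => H) :
    innerMatrix T (matMulVec S u) (matMulVec S v) = S * innerMatrix T u v * Sᵀ := by
  ext k i
  simp only [innerMatrix, matMulVec, of_apply, PiLp.toLp_apply, map_sum, map_smul, sum_inner,
    inner_sum, real_inner_smul_left, real_inner_smul_right, mul_apply, transpose_apply,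
    Finset.sum_mul]
  exact Finset.sum_congr rfl fun _ _ => Finset.sum_congr rfl fun _ _ => by ring

lemma inner_hEval_matMulVec (A : Fin g → (H →L[ℝ] H)) (X0 S : Matrix (Fin n) (Fin n) ℝ)
    (X : Fin g → Matrix (Fin n) (Fin n) ℝ) (u v : PiLp 2 fun _ : Fin n => H) :
    ⟪hEval A X0 X (matMulVec S u), matMulVec S v⟫ =
      ⟪hEval A (Sᵀ * X0 * S) (fun j => Sᵀ * X j * S) u, v⟫ := by
  have congr_trace : ∀ M G : Matrix (Fin n) (Fin n) ℝ,
      (M * (S * G * Sᵀ)).trace = (Sᵀ * M * S * G).trace := fun M G => by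
    rw [← Matrix.mul_assoc, ← Matrix.mul_assoc, trace_mul_comm, ← Matrix.mul_assoc,
      ← Matrix.mul_assoc]
  simp only [inner_hEval, innerMatrix_matMulVec, congr_trace]

lemma hEval_nonneg_congr_iff {S : Matrix (Fin n) (Fin n) ℝ} (hS : IsUnit S)
    (A : Fin g → (H →L[ℝ] H)) (X0 : Matrix (Fin n) (Fin n) ℝ)
    (X : Fin g → Matrix (Fin n) (Fin n) ℝ) :
    (∀ v, 0 ≤ ⟪hEval A (Sᵀ * X0 * S) (fun j => Sᵀ * X j * S) v, v⟫) ↔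
      ∀ v, 0 ≤ ⟪hEval A X0 X v, v⟫ := by
  refine ⟨fun h v => ?_, fun h v => inner_hEval_matMulVec A X0 S X v v ▸ h _⟩
  have hv : v = matMulVec S (matMulVec S⁻¹ v) := by
    rw [matMulVec_matMulVec, mul_nonsing_inv _ ((isUnit_iff_isUnit_det S).1 hS), matMulVec_one]
  rw [hv, inner_hEval_matMulVec]
  exact h _

end BlockOperators

section DirectSumZero

variable {H : Type} [NormedAddCommGroup H] [InnerProductSpace ℝ H] {g n : ℕ}

lemma inner_dsumZero_left (T : H →L[ℝ] H) (x y : WithLp 2 (H × ℝ)) :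
    ⟪dsumZero T x, y⟫ = ⟪T x.fst, y.fst⟫ := by
  simp [dsumZero, WithLp.prod_inner_apply]

lemma opIsSymm_dsumZero {T : H →L[ℝ] H} (hT : OpIsSymm T) : OpIsSymm (dsumZero T) := by
  intro x y
  rw [inner_dsumZero_left, hT, ← real_inner_comm x, inner_dsumZero_left, real_inner_comm]

def fstVec (w : PiLp 2 fun _ : Fin n => WithLp 2 (H × ℝ)) : PiLp 2 fun _ : Fin n => H :=
  WithLp.toLp 2 fun i => (w i).fst

def sndVec (w : PiLp 2 fun _ : Fin n => WithLp 2 (H × ℝ)) : Fin n → ℝ :=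
  fun i => (w i).snd

@[simp]
lemma fstVec_toLp (x : Fin n → H) (s : Fin n → ℝ) :
    fstVec (WithLp.toLp 2 fun i => WithLp.toLp 2 (x i, s i)) = WithLp.toLp 2 x :=
  rfl

@[simp]
lemma sndVec_toLp (x : Fin n → H) (s : Fin n → ℝ) :
    sndVec (WithLp.toLp 2 fun i => WithLp.toLp 2 (x i, s i)) = s :=
  rfl

lemma inner_hEval_dsumZero (A : Fin g → (H →L[ℝ] H)) (X0 : Matrix (Fin n) (Fin n) ℝ)
    (X : Fin g → Matrix (Fin n) (Fin n) ℝ) (w : PiLp 2 fun _ : Fin n => WithLp 2 (H × ℝ)) :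
    ⟪hEval (fun j => dsumZero (A j)) X0 X w, w⟫ =
      ⟪hEval A X0 X (fstVec w), fstVec w⟫ + X0 *ᵥ sndVec w ⬝ᵥ sndVec w := by
  have h_one : innerMatrix 1 w w =
      innerMatrix 1 (fstVec w) (fstVec w) + vecMulVec (sndVec w) (sndVec w) := by
    ext k i
    simp [innerMatrix, fstVec, sndVec, WithLp.prod_inner_apply, vecMulVec_apply, mul_comm]
  have h_dsum (T : H →L[ℝ] H) :
      innerMatrix (dsumZero T) w w = innerMatrix T (fstVec w) (fstVec w) := by
    ext k i
    simp only [innerMatrix, of_apply, fstVec, PiLp.toLp_apply, inner_dsumZero_left]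
  rw [inner_hEval, inner_hEval, h_one, Matrix.mul_add, trace_add, mul_vecMulVec, trace_vecMulVec]
  simp only [h_dsum]
  ring

lemma hEval_dsumZero_nonneg_iff {A : Fin g → (H →L[ℝ] H)} {X0 : Matrix (Fin n) (Fin n) ℝ}
    (X : Fin g → Matrix (Fin n) (Fin n) ℝ) (hX0 : X0.IsSymm) :
    (∀ w, 0 ≤ ⟪hEval (fun j => dsumZero (A j)) X0 X w, w⟫) ↔
      X0.PosSemidef ∧ ∀ v, 0 ≤ ⟪hEval A X0 X v, v⟫ := by
  simp only [inner_hEval_dsumZero]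
  constructor
  · intro h
    refine ⟨.of_dotProduct_mulVec_nonneg ?_ fun s => ?_, fun v => ?_⟩
    · rwa [IsHermitian, conjTranspose_eq_transpose_of_trivial]
    · simpa [dotProduct_comm, ← Pi.zero_def] using
        h (WithLp.toLp 2 fun i => WithLp.toLp 2 (0, s i))
    · simpa using h (WithLp.toLp 2 fun i => WithLp.toLp 2 (v i, 0))
  · rintro ⟨hpsd, h⟩ w
    exact add_nonneg (h _) (by simpa [dotProduct_comm] using hpsd.dotProduct_mulVec_nonneg _)

end DirectSumZero

lemma nonneg_of_forall_pos_nonneg_add_mul {c d : ℝ} (h : ∀ ε > 0, 0 ≤ c + ε * d) : 0 ≤ c := by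
  rcases le_or_gt d 0 with hd | hd
  · linarith [h 1 one_pos]
  · refine le_of_forall_pos_le_add fun ε hε => ?_
    simpa [div_mul_cancel₀ _ hd.ne'] using h (ε / d) (div_pos hε hd)

lemma Matrix.PosDef.exists_isUnit_transpose_mul_mul_eq_one {m : Type*} [Fintype m]
    [DecidableEq m] {P : Matrix m m ℝ} (hP : P.PosDef) : ∃ T, IsUnit T ∧ Tᵀ * P * T = 1 := by
  open scoped MatrixOrder in
  obtain ⟨S, rfl⟩ := CStarAlgebra.nonneg_iff_eq_star_mul_self.mp hP.posSemidef.nonneg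
  have hS : IsUnit S.det := by
    have h := (isUnit_iff_isUnit_det _).1 hP.isUnit
    rw [det_mul] at h
    exact isUnit_of_mul_isUnit_right h
  refine ⟨S⁻¹, (isUnit_iff_isUnit_det _).2 (isUnit_nonsing_inv_det S hS), ?_⟩
  rw [star_eq_conjTranspose, conjTranspose_eq_transpose_of_trivial, Matrix.mul_assoc,
    Matrix.mul_assoc, mul_nonsing_inv S hS, Matrix.mul_one, ← transpose_mul, mul_nonsing_inv S hS,
    transpose_one]

section MonicToHomogeneous

variable {H₁ H₂ : Type*} [NormedAddCommGroup H₁] [InnerProductSpace ℝ H₁]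
  [NormedAddCommGroup H₂] [InnerProductSpace ℝ H₂] {g n : ℕ}
  {A : Fin g → (H₁ →L[ℝ] H₁)} {B : Fin g → (H₂ →L[ℝ] H₂)}
  {X : Fin g → Matrix (Fin n) (Fin n) ℝ}

lemma hEval_nonneg_of_monic_of_posDef
    (hmono : ∀ Y : Fin g → Matrix (Fin n) (Fin n) ℝ, (∀ j, (Y j).IsSymm) →
      (∀ v, 0 ≤ ⟪monicEval A Y v, v⟫) → ∀ v, 0 ≤ ⟪monicEval B Y v, v⟫)
    {P : Matrix (Fin n) (Fin n) ℝ} (hP : P.PosDef) (hX : ∀ j, (X j).IsSymm)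
    (hAP : ∀ v, 0 ≤ ⟪hEval A P X v, v⟫) : ∀ v, 0 ≤ ⟪hEval B P X v, v⟫ := by
  obtain ⟨T, hT, hTPT⟩ := hP.exists_isUnit_transpose_mul_mul_eq_one
  have hY : ∀ j, (Tᵀ * X j * T).IsSymm := fun j => by
    rw [IsSymm, transpose_mul, transpose_mul, transpose_transpose, (hX j).eq, Matrix.mul_assoc]
  rw [← hEval_nonneg_congr_iff hT, hTPT] at hAP ⊢
  exact hmono _ hY hAP

lemma hEval_nonneg_of_monic_of_posSemidef
    (hmono : ∀ Y : Fin g → Matrix (Fin n) (Fin n) ℝ, (∀ j, (Y j).IsSymm) →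
      (∀ v, 0 ≤ ⟪monicEval A Y v, v⟫) → ∀ v, 0 ≤ ⟪monicEval B Y v, v⟫)
    {X0 : Matrix (Fin n) (Fin n) ℝ} (hX0 : X0.PosSemidef) (hX : ∀ j, (X j).IsSymm)
    (hAX0 : ∀ v, 0 ≤ ⟪hEval A X0 X v, v⟫) : ∀ v, 0 ≤ ⟪hEval B X0 X v, v⟫ := by
  intro v
  refine nonneg_of_forall_pos_nonneg_add_mul (d := ‖v‖ ^ 2) fun ε hε => ?_
  have hP : (X0 + ε • 1).PosDef :=
    add_comm (ε • 1) X0 ▸ (PosDef.one.smul hε).add_posSemidef hX0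
  have hAP : ∀ u, 0 ≤ ⟪hEval A (X0 + ε • 1) X u, u⟫ := fun u => by
    rw [inner_hEval_add_smul_one]
    exact add_nonneg (hAX0 u) (by positivity)
  rw [← inner_hEval_add_smul_one]
  exact hEval_nonneg_of_monic_of_posDef hmono hP hX hAP v

end MonicToHomogeneous

theorem inclusion_iff_extended_homogeneous_inclusion_general
    {g : ℕ} {H1 H2 : Type}
    [NormedAddCommGroup H1] [InnerProductSpace ℝ H1]
    [NormedAddCommGroup H2] [InnerProductSpace ℝ H2]
    (A : Fin g → (H1 →L[ℝ] H1)) (B : Fin g → (H2 →L[ℝ] H2))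
    (hA : ∀ j, OpIsSymm (A j)) (hB : ∀ j, OpIsSymm (B j))
    (n : ℕ) :
    (∀ X : Fin g → Matrix (Fin n) (Fin n) ℝ, (∀ j, (X j).IsSymm) →
        OpIsPos (monicEval A X) → OpIsPos (monicEval B X)) ↔
    (∀ (X0 : Matrix (Fin n) (Fin n) ℝ) (X : Fin g → Matrix (Fin n) (Fin n) ℝ),
        X0.IsSymm → (∀ j, (X j).IsSymm) →
        OpIsPos (hEval (fun j => dsumZero (A j)) X0 X) → OpIsPos (hEval B X0 X)) := by
  have hA' : ∀ j, OpIsSymm (dsumZero (A j)) := fun j => opIsSymm_dsumZero (hA j)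
  constructor
  · intro hmono X0 X hX0 hX hpos
    rw [opIsPos_hEval_iff hA' hX0 hX, hEval_dsumZero_nonneg_iff X hX0] at hpos
    rw [opIsPos_hEval_iff hB hX0 hX]
    refine hEval_nonneg_of_monic_of_posSemidef (fun Y hY hAY => ?_) hpos.1 hX hpos.2
    exact (opIsPos_hEval_iff hB isSymm_one hY).1
      (hmono Y hY ((opIsPos_hEval_iff hA isSymm_one hY).2 hAY))
  · intro hhom X hX hpos
    refine hhom 1 X isSymm_one hX ?_
    rw [opIsPos_hEval_iff hA' isSymm_one hX, hEval_dsumZero_nonneg_iff X isSymm_one]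
    exact ⟨PosSemidef.one, (opIsPos_hEval_iff hA isSymm_one hX).1 hpos⟩

/-- `D_{L₁}(n) ⊆ D_{L₂}(n)` iff `D_{ʰL̃₁}(n) ⊆ D_{ʰL₂}(n)` for the extended
pencil `L̃₁` on `H₁ ⊕ ℝ` with coefficients `A_j ⊕ 0`. -/
theorem inclusion_iff_extended_homogeneous_inclusion
    {g : ℕ} {H1 H2 : Type}
    [NormedAddCommGroup H1] [InnerProductSpace ℝ H1] [CompleteSpace H1]
    [TopologicalSpace.SeparableSpace H1]
    [NormedAddCommGroup H2] [InnerProductSpace ℝ H2] [CompleteSpace H2]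
    [TopologicalSpace.SeparableSpace H2]
    (A : Fin g → (H1 →L[ℝ] H1)) (B : Fin g → (H2 →L[ℝ] H2))
    (hA : ∀ j, OpIsSymm (A j)) (hB : ∀ j, OpIsSymm (B j))
    (n : ℕ) :
    (∀ X : Fin g → Matrix (Fin n) (Fin n) ℝ, (∀ j, (X j).IsSymm) →
        OpIsPos (monicEval A X) → OpIsPos (monicEval B X)) ↔
    (∀ (X0 : Matrix (Fin n) (Fin n) ℝ) (X : Fin g → Matrix (Fin n) (Fin n) ℝ),
        X0.IsSymm → (∀ j, (X j).IsSymm) →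
        OpIsPos (hEval (fun j => dsumZero (A j)) X0 X) → OpIsPos (hEval B X0 X)) :=
  inclusion_iff_extended_homogeneous_inclusion_general A B hA hB n
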